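/- arXiv:1407.1478 — 2 statements merged into one kernel-verified Lean document; each statement's English description precedes it below -/
import Mathlib

section
/- The tensor R = aΠ + bΦ + cΨ satisfies the first Gray condition with respect to J̄, i.e. R(J̄X, J̄Y, Z, U) = R(X,Y,Z,U) for all X,Y,Z,U, if and only if 2a + b = 0. (Here one assumes D and E are both nonzero, so the difference tensor is nonzero unless its coefficient vanishes.) -/
/-!
Split every vector along `V = D ⊕ E`, `E = Dᗮ`. Since `J` preserves both summands, each tensor
is a polynomial in the four forms `g_D, g_E` (the inner products of the components) and
`ω_D = g_D(J ·, ·), ω_E = g_E(J ·, ·)`, while `J̄` acts as `J` on `D` and as `-J` on `E`.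
`Ψ` only sees the `D`-components, so it is `J̄`-invariant; `Π` and `Φ` change by `-T/2` and
`-T/4`, where `T = g_D ⊙ g_E + ω_D ⊙ ω_E` is a sum of Kulkarni–Nomizu products. Hence
`R(J̄X, J̄Y, Z, U) - R(X, Y, Z, U) = -((2a + b)/4) T(X, Y, Z, U)`, and `T` does not vanish:
`T(x, ξ, x, ξ) = -‖x‖²‖ξ‖²` for `x ∈ D`, `ξ ∈ E`.
-/

open scoped RealInnerProductSpace
open Module

section

variable {V : Type*} [NormedAddCommGroup V] [InnerProductSpace ℝ V]

namespace Submodule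

variable {K : Submodule ℝ V} [K.HasOrthogonalProjection]

theorem starProjection_apply_of_mapsTo {T : V →ₗ[ℝ] V} (hK : ∀ x ∈ K, T x ∈ K)
    (hKo : ∀ x ∈ Kᗮ, T x ∈ Kᗮ) (x : V) : K.starProjection (T x) = T (K.starProjection x) := by
  refine eq_starProjection_of_mem_orthogonal' (hK _ (K.starProjection_apply_mem x))
    (hKo _ (Kᗮ.starProjection_apply_mem x)) ?_
  rw [← map_add, starProjection_add_starProjection_orthogonal]

theorem orthogonal_starProjection_apply_of_mapsTo {T : V →ₗ[ℝ] V} (hK : ∀ x ∈ K, T x ∈ K)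
    (hKo : ∀ x ∈ Kᗮ, T x ∈ Kᗮ) (x : V) : Kᗮ.starProjection (T x) = T (Kᗮ.starProjection x) := by
  rw [starProjection_orthogonal_val, starProjection_orthogonal_val,
    starProjection_apply_of_mapsTo hK hKo, map_sub]

end Submodule

section SkewMap

variable {J : V →ₗ[ℝ] V} (hJskew : ∀ x y, ⟪J x, y⟫ = -⟪x, J y⟫)
include hJskew

theorem inner_apply_right_of_skew (x y : V) : ⟪x, J y⟫ = -⟪J x, y⟫ := by
  rw [hJskew, neg_neg]

theorem inner_apply_self_of_skew (x : V) : ⟪J x, x⟫ = 0 := by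
  have h := hJskew x x
  rw [real_inner_comm (J x) x] at h
  linarith

theorem mem_orthogonal_apply_of_skew {K : Submodule ℝ V} (hK : ∀ x ∈ K, J x ∈ K) {v : V}
    (hv : v ∈ Kᗮ) : J v ∈ Kᗮ := by
  intro u hu
  rw [inner_apply_right_of_skew hJskew, hv _ (hK u hu), neg_zero]

variable {K : Submodule ℝ V} [K.HasOrthogonalProjection] (hK : ∀ x ∈ K, J x ∈ K)
include hK

theorem starProjection_apply_of_skew (x : V) :
    K.starProjection (J x) = J (K.starProjection x) :=
  K.starProjection_apply_of_mapsTo hK (fun _ => mem_orthogonal_apply_of_skew hJskew hK) x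

theorem orthogonal_starProjection_apply_of_skew (x : V) :
    Kᗮ.starProjection (J x) = J (Kᗮ.starProjection x) :=
  K.orthogonal_starProjection_apply_of_mapsTo hK (fun _ => mem_orthogonal_apply_of_skew hJskew hK) x

end SkewMap

section Twist

variable {J Jb : V →ₗ[ℝ] V} {D : Submodule ℝ V} [D.HasOrthogonalProjection]
  (hJskew : ∀ x y, ⟪J x, y⟫ = -⟪x, J y⟫) (hDJ : ∀ x ∈ D, J x ∈ D)
  (hJbD : ∀ x ∈ D, Jb x = J x) (hJbE : ∀ x ∈ Dᗮ, Jb x = -(J x))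

include hJbD hJbE in
theorem apply_eq_starProjection_sub (x : V) :
    Jb x = J (D.starProjection x) - J (Dᗮ.starProjection x) := by
  conv_lhs => rw [← D.starProjection_add_starProjection_orthogonal x]
  rw [map_add, hJbD _ (D.starProjection_apply_mem x), hJbE _ (Dᗮ.starProjection_apply_mem x),
    sub_eq_add_neg]

include hJskew hDJ hJbD hJbE

theorem starProjection_apply_twist (x : V) : D.starProjection (Jb x) = J (D.starProjection x) :=
  Submodule.eq_starProjection_of_mem_orthogonal' (hDJ _ (D.starProjection_apply_mem x))
    (Dᗮ.neg_mem (mem_orthogonal_apply_of_skew hJskew hDJ (Dᗮ.starProjection_apply_mem x)))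
    (by rw [apply_eq_starProjection_sub hJbD hJbE, sub_eq_add_neg])

theorem orthogonal_starProjection_apply_twist (x : V) :
    Dᗮ.starProjection (Jb x) = -J (Dᗮ.starProjection x) := by
  rw [Submodule.starProjection_orthogonal_val, starProjection_apply_twist hJskew hDJ hJbD hJbE,
    apply_eq_starProjection_sub hJbD hJbE]
  abel

end Twist

noncomputable section Tensors

def projInner (K : Submodule ℝ V) [K.HasOrthogonalProjection] (x y : V) : ℝ :=
  ⟪K.starProjection x, K.starProjection y⟫

theorem inner_eq_projInner_add_projInner (K : Submodule ℝ V) [K.HasOrthogonalProjection]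
    (x y : V) : ⟪x, y⟫ = projInner K x y + projInner Kᗮ x y := by
  have projInner_eq (L : Submodule ℝ V) [L.HasOrthogonalProjection] :
      projInner L x y = ⟪L.starProjection x, y⟫ := by
    rw [projInner, ← Submodule.inner_starProjection_left_eq_right,
      Submodule.starProjection_eq_self_iff.mpr (L.starProjection_apply_mem x)]
  rw [projInner_eq, projInner_eq, ← inner_add_left,
    Submodule.starProjection_add_starProjection_orthogonal]

def kulkarniNomizu (α β : V → V → ℝ) (X Y Z U : V) : ℝ :=
  α X U * β Y Z + α Y Z * β X U - α X Z * β Y U - α Y U * β X Z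

def piTensor (J : V →ₗ[ℝ] V) (X Y Z U : V) : ℝ :=
  (1/4) * (⟪Y, Z⟫ * ⟪X, U⟫ - ⟪X, Z⟫ * ⟪Y, U⟫
      + ⟪J Y, Z⟫ * ⟪J X, U⟫ - ⟪J X, Z⟫ * ⟪J Y, U⟫ - 2 * ⟪J X, Y⟫ * ⟪J Z, U⟫)

def phiTensor (J : V →ₗ[ℝ] V) (h : V → V → ℝ) (X Y Z U : V) : ℝ :=
  (1/8) * (⟪Y, Z⟫ * h X U - ⟪X, Z⟫ * h Y U
      + ⟪X, U⟫ * h Y Z - ⟪Y, U⟫ * h X Z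
      + ⟪J Y, Z⟫ * h (J X) U - ⟪J X, Z⟫ * h (J Y) U
      + ⟪J X, U⟫ * h (J Y) Z - ⟪J Y, U⟫ * h (J X) Z
      - 2 * ⟪J X, Y⟫ * h (J Z) U - 2 * ⟪J Z, U⟫ * h (J X) Y)

def psiTensor (J : V →ₗ[ℝ] V) (h : V → V → ℝ) (X Y Z U : V) : ℝ :=
  -(h (J X) Y * h (J Z) U)

def crossTensor (J : V →ₗ[ℝ] V) (D : Submodule ℝ V) [D.HasOrthogonalProjection] (X Y Z U : V) :
    ℝ :=
  kulkarniNomizu (projInner D) (projInner Dᗮ) X Y Z U +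
    kulkarniNomizu (fun x y => projInner D (J x) y) (fun x y => projInner Dᗮ (J x) y) X Y Z U

end Tensors

section GrayCondition

variable {J Jb : V →ₗ[ℝ] V} {D : Submodule ℝ V} [D.HasOrthogonalProjection]
  (hJ2 : ∀ x, J (J x) = -x) (hJskew : ∀ x y, ⟪J x, y⟫ = -⟪x, J y⟫) (hDJ : ∀ x ∈ D, J x ∈ D)
  (hJbD : ∀ x ∈ D, Jb x = J x) (hJbE : ∀ x ∈ Dᗮ, Jb x = -(J x))
include hJ2 hJskew hDJ hJbD hJbE

-- The splitting of the inner products is a separate pass: `projInner` unfolds to inner products,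
-- so rewriting with both at once would loop.
theorem piTensor_twist_sub (X Y Z U : V) :
    piTensor J (Jb X) (Jb Y) Z U - piTensor J X Y Z U = -(1/2) * crossTensor J D X Y Z U := by
  simp only [piTensor, crossTensor, kulkarniNomizu]
  simp only [inner_eq_projInner_add_projInner D]
  simp only [projInner, starProjection_apply_of_skew hJskew hDJ,
    orthogonal_starProjection_apply_of_skew hJskew hDJ,
    starProjection_apply_twist hJskew hDJ hJbD hJbE,
    orthogonal_starProjection_apply_twist hJskew hDJ hJbD hJbE, map_neg, hJ2,
    inner_neg_left, inner_neg_right, inner_apply_right_of_skew hJskew]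
  ring

theorem phiTensor_twist_sub (X Y Z U : V) :
    phiTensor J (projInner D) (Jb X) (Jb Y) Z U - phiTensor J (projInner D) X Y Z U =
      -(1/4) * crossTensor J D X Y Z U := by
  simp only [phiTensor, crossTensor, kulkarniNomizu]
  simp only [inner_eq_projInner_add_projInner D]
  simp only [projInner, starProjection_apply_of_skew hJskew hDJ,
    orthogonal_starProjection_apply_of_skew hJskew hDJ,
    starProjection_apply_twist hJskew hDJ hJbD hJbE,
    orthogonal_starProjection_apply_twist hJskew hDJ hJbD hJbE, map_neg, hJ2,
    inner_neg_left, inner_neg_right, inner_apply_right_of_skew hJskew]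
  ring

theorem psiTensor_twist (X Y Z U : V) :
    psiTensor J (projInner D) (Jb X) (Jb Y) Z U = psiTensor J (projInner D) X Y Z U := by
  simp only [psiTensor, projInner, starProjection_apply_of_skew hJskew hDJ,
    starProjection_apply_twist hJskew hDJ hJbD hJbE, hJ2, map_neg,
    inner_neg_left, inner_apply_right_of_skew hJskew, neg_neg]

end GrayCondition

theorem crossTensor_apply_of_mem_of_mem_orthogonal {J : V →ₗ[ℝ] V}
    (hJskew : ∀ x y, ⟪J x, y⟫ = -⟪x, J y⟫) {D : Submodule ℝ V} [D.HasOrthogonalProjection]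
    (hDJ : ∀ x ∈ D, J x ∈ D) {x ξ : V} (hx : x ∈ D) (hξ : ξ ∈ Dᗮ) :
    crossTensor J D x ξ x ξ = -(‖x‖ ^ 2 * ‖ξ‖ ^ 2) := by
  have hx' : x ∈ Dᗮᗮ := D.le_orthogonal_orthogonal hx
  simp only [crossTensor, kulkarniNomizu, projInner,
    Submodule.starProjection_eq_self_iff.mpr hx, Submodule.starProjection_eq_self_iff.mpr hξ,
    Submodule.starProjection_eq_self_iff.mpr (hDJ x hx),
    (D.starProjection_apply_eq_zero_iff).mpr hξ, (Dᗮ.starProjection_apply_eq_zero_iff).mpr hx',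
    (D.starProjection_apply_eq_zero_iff).mpr (mem_orthogonal_apply_of_skew hJskew hDJ hξ),
    inner_zero_left, inner_zero_right, inner_apply_self_of_skew hJskew,
    real_inner_self_eq_norm_sq]
  ring

end

theorem stmt8_general {V : Type*} [NormedAddCommGroup V] [InnerProductSpace ℝ V] [FiniteDimensional ℝ V] (hV : finrank ℝ V = 4)
    (J : V →ₗ[ℝ] V) (hJ2 : ∀ x, J (J x) = -x)
    (hJskew : ∀ x y, ⟪J x, y⟫ = -⟪x, J y⟫)
    (D : Submodule ℝ V) (hDdim : finrank ℝ D = 2)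
    (hDJ : ∀ x ∈ D, J x ∈ D)
    (h : V → V → ℝ)
    (hh : ∀ x y, h x y = ⟪(Submodule.orthogonalProjectionOnto D x : V), (Submodule.orthogonalProjectionOnto D y : V)⟫)
    (Jb : V →ₗ[ℝ] V) (hJbD : ∀ x ∈ D, Jb x = J x)
    (hJbE : ∀ x ∈ Dᗮ, Jb x = -(J x))
    (Pp : V → V → V → V → ℝ)
    (hPp : ∀ X Y Z U, Pp X Y Z U = (1/4) * (⟪Y, Z⟫ * ⟪X, U⟫ - ⟪X, Z⟫ * ⟪Y, U⟫
      + ⟪J Y, Z⟫ * ⟪J X, U⟫ - ⟪J X, Z⟫ * ⟪J Y, U⟫ - 2 * ⟪J X, Y⟫ * ⟪J Z, U⟫))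
    (Ph : V → V → V → V → ℝ)
    (hPh : ∀ X Y Z U, Ph X Y Z U = (1/8) * (⟪Y, Z⟫ * h X U - ⟪X, Z⟫ * h Y U
      + ⟪X, U⟫ * h Y Z - ⟪Y, U⟫ * h X Z
      + ⟪J Y, Z⟫ * h (J X) U - ⟪J X, Z⟫ * h (J Y) U
      + ⟪J X, U⟫ * h (J Y) Z - ⟪J Y, U⟫ * h (J X) Z
      - 2 * ⟪J X, Y⟫ * h (J Z) U - 2 * ⟪J Z, U⟫ * h (J X) Y))
    (Ps : V → V → V → V → ℝ)
    (hPs : ∀ X Y Z U, Ps X Y Z U = -(h (J X) Y * h (J Z) U))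
    (a b c : ℝ) (R : V → V → V → V → ℝ)
    (hR : ∀ X Y Z U, R X Y Z U = a * Pp X Y Z U + b * Ph X Y Z U + c * Ps X Y Z U) :
    (∀ X Y Z U : V, R (Jb X) (Jb Y) Z U = R X Y Z U) ↔ 2 * a + b = 0 := by
  obtain rfl : h = projInner D := by ext x y; exact hh x y
  obtain rfl : Pp = piTensor J := by ext X Y Z U; exact hPp X Y Z U
  obtain rfl : Ph = phiTensor J (projInner D) := by ext X Y Z U; exact hPh X Y Z U
  obtain rfl : Ps = psiTensor J (projInner D) := by ext X Y Z U; exact hPs X Y Z U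
  have key (X Y Z U : V) :
      R (Jb X) (Jb Y) Z U - R X Y Z U = -((2 * a + b) / 4) * crossTensor J D X Y Z U := by
    rw [hR, hR]
    linear_combination a * piTensor_twist_sub hJ2 hJskew hDJ hJbD hJbE X Y Z U
      + b * phiTensor_twist_sub hJ2 hJskew hDJ hJbD hJbE X Y Z U
      + c * psiTensor_twist hJ2 hJskew hDJ hJbD hJbE X Y Z U
  refine ⟨fun hGray => ?_, fun hab X Y Z U => by
    linear_combination key X Y Z U - crossTensor J D X Y Z U / 4 * hab⟩
  have hdim := D.finrank_add_finrank_orthogonal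
  obtain ⟨x, hxD, hx⟩ :=
    D.exists_mem_ne_zero_of_ne_bot (mt Submodule.finrank_eq_zero.mpr (by omega))
  obtain ⟨ξ, hξE, hξ⟩ :=
    Dᗮ.exists_mem_ne_zero_of_ne_bot (mt Submodule.finrank_eq_zero.mpr (by omega))
  have hkey := key x ξ x ξ
  rw [hGray, sub_self, crossTensor_apply_of_mem_of_mem_orthogonal hJskew hDJ hxD hξE] at hkey
  have hprod : (2 * a + b) * (‖x‖ ^ 2 * ‖ξ‖ ^ 2) = 0 := by linear_combination -4 * hkey
  exact (mul_eq_zero.mp hprod).resolve_right (by positivity)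

theorem stmt8 {V : Type*} [NormedAddCommGroup V] [InnerProductSpace ℝ V] [FiniteDimensional ℝ V] (hV : finrank ℝ V = 4)
    (J : V →ₗ[ℝ] V) (hJ2 : ∀ x, J (J x) = -x)
    (hJskew : ∀ x y, ⟪J x, y⟫ = -⟪x, J y⟫)
    (D : Submodule ℝ V) (hDdim : finrank ℝ D = 2)
    (hDJ : ∀ x ∈ D, J x ∈ D)
    (h : V → V → ℝ)
    (hh : ∀ x y, h x y = ⟪(Submodule.orthogonalProjectionOnto D x : V), (Submodule.orthogonalProjectionOnto D y : V)⟫)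
    (m : V → V → ℝ)
    (hm : ∀ x y, m x y = ⟪(Submodule.orthogonalProjectionOnto Dᗮ x : V), (Submodule.orthogonalProjectionOnto Dᗮ y : V)⟫)
    (Jb : V →ₗ[ℝ] V) (hJbD : ∀ x ∈ D, Jb x = J x)
    (hJbE : ∀ x ∈ Dᗮ, Jb x = -(J x))
    (Pp : V → V → V → V → ℝ)
    (hPp : ∀ X Y Z U, Pp X Y Z U = (1/4) * (⟪Y, Z⟫ * ⟪X, U⟫ - ⟪X, Z⟫ * ⟪Y, U⟫
      + ⟪J Y, Z⟫ * ⟪J X, U⟫ - ⟪J X, Z⟫ * ⟪J Y, U⟫ - 2 * ⟪J X, Y⟫ * ⟪J Z, U⟫))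
    (Ph : V → V → V → V → ℝ)
    (hPh : ∀ X Y Z U, Ph X Y Z U = (1/8) * (⟪Y, Z⟫ * h X U - ⟪X, Z⟫ * h Y U
      + ⟪X, U⟫ * h Y Z - ⟪Y, U⟫ * h X Z
      + ⟪J Y, Z⟫ * h (J X) U - ⟪J X, Z⟫ * h (J Y) U
      + ⟪J X, U⟫ * h (J Y) Z - ⟪J Y, U⟫ * h (J X) Z
      - 2 * ⟪J X, Y⟫ * h (J Z) U - 2 * ⟪J Z, U⟫ * h (J X) Y))
    (Ps : V → V → V → V → ℝ)
    (hPs : ∀ X Y Z U, Ps X Y Z U = -(h (J X) Y * h (J Z) U))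
    (a b c : ℝ) (R : V → V → V → V → ℝ)
    (hR : ∀ X Y Z U, R X Y Z U = a * Pp X Y Z U + b * Ph X Y Z U + c * Ps X Y Z U) :
    (∀ X Y Z U : V, R (Jb X) (Jb Y) Z U = R X Y Z U) ↔ 2 * a + b = 0 :=
  stmt8_general hV J hJ2 hJskew D hDdim hDJ h hh Jb hJbD hJbE Pp hPp Ph hPh Ps hPs a b c R hR
end

section
/- If the Ricci tensor of R = aΠ + bΦ + cΨ is computed by contraction, its eigenvalues on E and D are λ = (3/2)a + b/4 and μ = (3/2)a + (5/4)b + c respectively; that is, Ric(X,Y) = λ·m(X,Y) + μ·h(X,Y), where Ric(X,Y) = Σᵢ R(eᵢ, X, Y, eᵢ) over an orthonormal basis (eᵢ) of V. -/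
/-!
Contracting over an orthonormal basis `eᵢ` turns every term of the three tensors into a Parseval
sum `∑ ⟪u, eᵢ⟫⟪v, eᵢ⟫ = ⟪u, v⟫` or a trace `∑ ⟪T eᵢ, eᵢ⟫`. Write `h(x, y) = ⟪P x, y⟫` with `P` the
orthogonal projection onto `D`; it commutes with `J` because `D` is `J`-invariant. The traces that
occur are `tr 1 = 4`, `tr P = dim D = 2` and `tr J = tr JP = 0` (both maps are skew), so
`Ric_Π = (3/2) g`, `Ric_Φ = g/4 + h`, `Ric_Ψ = h`, and `g = h + m` gives the eigenvalues.
-/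

open scoped RealInnerProductSpace
open Module

noncomputable section KaehlerTensors

variable {V : Type*} [NormedAddCommGroup V] [InnerProductSpace ℝ V]

def kaehlerPi (J : V →ₗ[ℝ] V) (X Y Z U : V) : ℝ :=
  (1/4) * (⟪Y, Z⟫ * ⟪X, U⟫ - ⟪X, Z⟫ * ⟪Y, U⟫
    + ⟪J Y, Z⟫ * ⟪J X, U⟫ - ⟪J X, Z⟫ * ⟪J Y, U⟫ - 2 * ⟪J X, Y⟫ * ⟪J Z, U⟫)

def kaehlerPhi (J : V →ₗ[ℝ] V) (h : V → V → ℝ) (X Y Z U : V) : ℝ :=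
  (1/8) * (⟪Y, Z⟫ * h X U - ⟪X, Z⟫ * h Y U
    + ⟪X, U⟫ * h Y Z - ⟪Y, U⟫ * h X Z
    + ⟪J Y, Z⟫ * h (J X) U - ⟪J X, Z⟫ * h (J Y) U
    + ⟪J X, U⟫ * h (J Y) Z - ⟪J Y, U⟫ * h (J X) Z
    - 2 * ⟪J X, Y⟫ * h (J Z) U - 2 * ⟪J Z, U⟫ * h (J X) Y)

def kaehlerPsi (J : V →ₗ[ℝ] V) (h : V → V → ℝ) (X Y Z U : V) : ℝ :=
  -(h (J X) Y * h (J Z) U)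

theorem inner_apply_self_eq_zero_of_skew {T : V → V} (hT : ∀ x y, ⟪T x, y⟫ = -⟪x, T y⟫)
    (x : V) : ⟪T x, x⟫ = 0 := by
  linarith [hT x x, real_inner_comm x (T x)]

theorem inner_apply_comm_of_skew {T : V → V} (hT : ∀ x y, ⟪T x, y⟫ = -⟪x, T y⟫) (x y : V) :
    ⟪T x, y⟫ = -⟪T y, x⟫ := by
  rw [hT, real_inner_comm]

theorem inner_apply_apply_of_skew {T : V → V} (hT2 : ∀ x, T (T x) = -x)
    (hT : ∀ x y, ⟪T x, y⟫ = -⟪x, T y⟫) (x y : V) : ⟪T x, T y⟫ = ⟪x, y⟫ := by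
  rw [hT, hT2, inner_neg_right, neg_neg]

theorem Submodule.starProjection_apply_comm_of_skew {J : V →ₗ[ℝ] V}
    (hJ : ∀ x y, ⟪J x, y⟫ = -⟪x, J y⟫) {D : Submodule ℝ V} [D.HasOrthogonalProjection]
    (hDJ : ∀ x ∈ D, J x ∈ D) (x : V) : D.starProjection (J x) = J (D.starProjection x) := by
  refine D.eq_starProjection_of_mem_orthogonal (hDJ _ (D.starProjection_apply_mem x)) ?_
  rw [← map_sub, Submodule.mem_orthogonal]
  intro u hu
  rw [← neg_eq_zero, ← hJ]
  exact (Submodule.mem_orthogonal D _).mp (D.sub_starProjection_mem_orthogonal x) _ (hDJ u hu)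

theorem skew_comp_of_isSymmetric_of_comm {J P : V →ₗ[ℝ] V} (hJ : ∀ x y, ⟪J x, y⟫ = -⟪x, J y⟫)
    (hP : P.IsSymmetric) (hPJ : ∀ x, P (J x) = J (P x)) (x y : V) :
    ⟪J (P x), y⟫ = -⟪x, J (P y)⟫ := by
  rw [hJ, ← hPJ, hP]

theorem Submodule.inner_starProjection_starProjection (K : Submodule ℝ V)
    [K.HasOrthogonalProjection] (x y : V) :
    ⟪K.starProjection x, K.starProjection y⟫ = ⟪K.starProjection x, y⟫ := by
  rw [← K.inner_starProjection_left_eq_right,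
    K.starProjection_eq_self_iff.2 (K.starProjection_apply_mem x)]

theorem Submodule.trace_starProjection [FiniteDimensional ℝ V] (K : Submodule ℝ V) :
    LinearMap.trace ℝ V K.starProjection = finrank ℝ K :=
  LinearMap.IsProj.trace ⟨K.starProjection_apply_mem, fun _ => K.starProjection_eq_self_iff.2⟩

namespace OrthonormalBasis

variable {ι : Type*} [Fintype ι] (e : OrthonormalBasis ι ℝ V)

theorem sum_inner_mul_inner' (u v : V) : ∑ i, ⟪u, e i⟫ * ⟪v, e i⟫ = ⟪u, v⟫ := by
  simpa only [real_inner_comm v] using e.sum_inner_mul_inner u v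

theorem sum_inner_self_eq_card : ∑ i, ⟪e i, e i⟫ = Fintype.card ι := by
  simp

theorem sum_inner_apply_eq_trace (T : V →ₗ[ℝ] V) :
    ∑ i, ⟪T (e i), e i⟫ = LinearMap.trace ℝ V T := by
  simp only [LinearMap.trace_eq_sum_inner T e, real_inner_comm]

end OrthonormalBasis

section Contraction

variable {ι : Type*} [Fintype ι] (e : OrthonormalBasis ι ℝ V) {J : V →ₗ[ℝ] V}

theorem sum_kaehlerPi (hJ2 : ∀ x, J (J x) = -x) (hJ : ∀ x y, ⟪J x, y⟫ = -⟪x, J y⟫) (X Y : V) :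
    ∑ i, kaehlerPi J (e i) X Y (e i) = (Fintype.card ι + 2) / 4 * ⟪X, Y⟫ := by
  have hsummand : ∀ i, kaehlerPi J (e i) X Y (e i) = (1/4) * (⟪X, Y⟫ * ⟪e i, e i⟫
      - ⟪Y, e i⟫ * ⟪X, e i⟫ + 3 * (⟪J X, e i⟫ * ⟪J Y, e i⟫)) := by
    intro i
    rw [kaehlerPi, inner_apply_self_eq_zero_of_skew hJ, real_inner_comm (e i) Y,
      inner_apply_comm_of_skew hJ (e i) Y, inner_apply_comm_of_skew hJ (e i) X]
    ring
  simp only [hsummand, ← Finset.mul_sum, Finset.sum_add_distrib, Finset.sum_sub_distrib,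
    e.sum_inner_mul_inner', e.sum_inner_self_eq_card, inner_apply_apply_of_skew hJ2 hJ,
    real_inner_comm X Y]
  ring

theorem sum_kaehlerPhi (hJ2 : ∀ x, J (J x) = -x) (hJ : ∀ x y, ⟪J x, y⟫ = -⟪x, J y⟫)
    {P : V →ₗ[ℝ] V} (hP : P.IsSymmetric) (hPJ : ∀ x, P (J x) = J (P x)) (X Y : V) :
    ∑ i, kaehlerPhi J (fun x y => ⟪P x, y⟫) (e i) X Y (e i)
      = (LinearMap.trace ℝ V P * ⟪X, Y⟫ + (Fintype.card ι + 4) * ⟪P X, Y⟫) / 8 := by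
  have hJP := skew_comp_of_isSymmetric_of_comm hJ hP hPJ
  have hsummand : ∀ i, kaehlerPhi J (fun x y => ⟪P x, y⟫) (e i) X Y (e i) = (1/8) *
      (⟪X, Y⟫ * ⟪P (e i), e i⟫ + ⟪P X, Y⟫ * ⟪e i, e i⟫ - ⟪Y, e i⟫ * ⟪P X, e i⟫
        - ⟪X, e i⟫ * ⟪P Y, e i⟫ + 3 * (⟪J X, e i⟫ * ⟪J (P Y), e i⟫)
        + 3 * (⟪J Y, e i⟫ * ⟪J (P X), e i⟫)) := by
    intro i
    simp only [kaehlerPhi, hPJ]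
    rw [inner_apply_self_eq_zero_of_skew hJ, inner_apply_self_eq_zero_of_skew hJP,
      real_inner_comm (e i) Y, hP (e i) Y, real_inner_comm (e i) (P Y),
      inner_apply_comm_of_skew hJ (e i) Y, inner_apply_comm_of_skew hJ (e i) X,
      inner_apply_comm_of_skew hJP (e i) Y, inner_apply_comm_of_skew hJP (e i) X]
    ring
  simp only [hsummand, ← Finset.mul_sum, Finset.sum_add_distrib, Finset.sum_sub_distrib,
    e.sum_inner_mul_inner', e.sum_inner_self_eq_card, e.sum_inner_apply_eq_trace,
    inner_apply_apply_of_skew hJ2 hJ, ← hP X Y, real_inner_comm Y (P X)]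
  ring

theorem sum_kaehlerPsi (hJ2 : ∀ x, J (J x) = -x) (hJ : ∀ x y, ⟪J x, y⟫ = -⟪x, J y⟫)
    {P : V →ₗ[ℝ] V} (hP : P.IsSymmetric) (hPJ : ∀ x, P (J x) = J (P x)) (X Y : V) :
    ∑ i, kaehlerPsi J (fun x y => ⟪P x, y⟫) (e i) X Y (e i) = ⟪P X, P Y⟫ := by
  have hsummand : ∀ i, kaehlerPsi J (fun x y => ⟪P x, y⟫) (e i) X Y (e i)
      = ⟪J (P X), e i⟫ * ⟪J (P Y), e i⟫ := by
    intro i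
    simp only [kaehlerPsi, hPJ]
    rw [inner_apply_comm_of_skew (skew_comp_of_isSymmetric_of_comm hJ hP hPJ) (e i)]
    ring
  simp only [hsummand, e.sum_inner_mul_inner', inner_apply_apply_of_skew hJ2 hJ]

end Contraction

end KaehlerTensors

theorem stmt13_general {V : Type*} [NormedAddCommGroup V] [InnerProductSpace ℝ V] [FiniteDimensional ℝ V]
    (J : V →ₗ[ℝ] V) (hJ2 : ∀ x, J (J x) = -x)
    (hJskew : ∀ x y, ⟪J x, y⟫ = -⟪x, J y⟫)
    (D : Submodule ℝ V) (hDdim : finrank ℝ D = 2)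
    (hDJ : ∀ x ∈ D, J x ∈ D)
    (h : V → V → ℝ)
    (hh : ∀ x y, h x y = ⟪(D.orthogonalProjection x : V), (D.orthogonalProjection y : V)⟫)
    (m : V → V → ℝ)
    (hm : ∀ x y, m x y = ⟪(Dᗮ.orthogonalProjection x : V), (Dᗮ.orthogonalProjection y : V)⟫)
    (Pp : V → V → V → V → ℝ)
    (hPp : ∀ X Y Z U, Pp X Y Z U = (1/4) * (⟪Y, Z⟫ * ⟪X, U⟫ - ⟪X, Z⟫ * ⟪Y, U⟫
      + ⟪J Y, Z⟫ * ⟪J X, U⟫ - ⟪J X, Z⟫ * ⟪J Y, U⟫ - 2 * ⟪J X, Y⟫ * ⟪J Z, U⟫))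
    (Ph : V → V → V → V → ℝ)
    (hPh : ∀ X Y Z U, Ph X Y Z U = (1/8) * (⟪Y, Z⟫ * h X U - ⟪X, Z⟫ * h Y U
      + ⟪X, U⟫ * h Y Z - ⟪Y, U⟫ * h X Z
      + ⟪J Y, Z⟫ * h (J X) U - ⟪J X, Z⟫ * h (J Y) U
      + ⟪J X, U⟫ * h (J Y) Z - ⟪J Y, U⟫ * h (J X) Z
      - 2 * ⟪J X, Y⟫ * h (J Z) U - 2 * ⟪J Z, U⟫ * h (J X) Y))
    (Ps : V → V → V → V → ℝ)
    (hPs : ∀ X Y Z U, Ps X Y Z U = -(h (J X) Y * h (J Z) U))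
    (a b c : ℝ) (R : V → V → V → V → ℝ)
    (hR : ∀ X Y Z U, R X Y Z U = a * Pp X Y Z U + b * Ph X Y Z U + c * Ps X Y Z U)
    (e : OrthonormalBasis (Fin 4) ℝ V) :
    ∀ X Y : V, ∑ i, R (e i) X Y (e i)
      = ((3/2) * a + b / 4) * m X Y + ((3/2) * a + (5/4) * b + c) * h X Y := by
  intro X Y
  let P : V →ₗ[ℝ] V := D.starProjection
  have hP : P.IsSymmetric := D.starProjection_isSymmetric
  have hPJ : ∀ x, P (J x) = J (P x) := D.starProjection_apply_comm_of_skew hJskew hDJ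
  have htrace : LinearMap.trace ℝ V P = 2 := by
    rw [D.trace_starProjection, hDdim, Nat.cast_ofNat]
  have hPP : ∀ x y, ⟪P x, P y⟫ = ⟪P x, y⟫ := D.inner_starProjection_starProjection
  have hhP : h = fun x y => ⟪P x, y⟫ := funext₂ fun x y => (hh x y).trans (hPP x y)
  have hmP : m X Y = ⟪X, Y⟫ - ⟪P X, Y⟫ := by
    rw [(hm X Y).trans (Dᗮ.inner_starProjection_starProjection X Y),
      D.starProjection_orthogonal_val, inner_sub_left]
    rfl
  obtain rfl : Pp = kaehlerPi J := by funext X Y Z U; exact hPp X Y Z U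
  obtain rfl : Ph = kaehlerPhi J h := by funext X Y Z U; exact hPh X Y Z U
  obtain rfl : Ps = kaehlerPsi J h := by funext X Y Z U; exact hPs X Y Z U
  subst hhP
  simp only [hR, Finset.sum_add_distrib, ← Finset.mul_sum, sum_kaehlerPi e hJ2 hJskew,
    sum_kaehlerPhi e hJ2 hJskew hP hPJ, sum_kaehlerPsi e hJ2 hJskew hP hPJ, htrace, hmP, hPP,
    Fintype.card_fin]
  ring

theorem stmt13 {V : Type*} [NormedAddCommGroup V] [InnerProductSpace ℝ V] [FiniteDimensional ℝ V] (hV : finrank ℝ V = 4)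
    (J : V →ₗ[ℝ] V) (hJ2 : ∀ x, J (J x) = -x)
    (hJskew : ∀ x y, ⟪J x, y⟫ = -⟪x, J y⟫)
    (D : Submodule ℝ V) (hDdim : finrank ℝ D = 2)
    (hDJ : ∀ x ∈ D, J x ∈ D)
    (h : V → V → ℝ)
    (hh : ∀ x y, h x y = ⟪(D.orthogonalProjection x : V), (D.orthogonalProjection y : V)⟫)
    (m : V → V → ℝ)
    (hm : ∀ x y, m x y = ⟪(Dᗮ.orthogonalProjection x : V), (Dᗮ.orthogonalProjection y : V)⟫)
    (Pp : V → V → V → V → ℝ)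
    (hPp : ∀ X Y Z U, Pp X Y Z U = (1/4) * (⟪Y, Z⟫ * ⟪X, U⟫ - ⟪X, Z⟫ * ⟪Y, U⟫
      + ⟪J Y, Z⟫ * ⟪J X, U⟫ - ⟪J X, Z⟫ * ⟪J Y, U⟫ - 2 * ⟪J X, Y⟫ * ⟪J Z, U⟫))
    (Ph : V → V → V → V → ℝ)
    (hPh : ∀ X Y Z U, Ph X Y Z U = (1/8) * (⟪Y, Z⟫ * h X U - ⟪X, Z⟫ * h Y U
      + ⟪X, U⟫ * h Y Z - ⟪Y, U⟫ * h X Z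
      + ⟪J Y, Z⟫ * h (J X) U - ⟪J X, Z⟫ * h (J Y) U
      + ⟪J X, U⟫ * h (J Y) Z - ⟪J Y, U⟫ * h (J X) Z
      - 2 * ⟪J X, Y⟫ * h (J Z) U - 2 * ⟪J Z, U⟫ * h (J X) Y))
    (Ps : V → V → V → V → ℝ)
    (hPs : ∀ X Y Z U, Ps X Y Z U = -(h (J X) Y * h (J Z) U))
    (a b c : ℝ) (R : V → V → V → V → ℝ)
    (hR : ∀ X Y Z U, R X Y Z U = a * Pp X Y Z U + b * Ph X Y Z U + c * Ps X Y Z U)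
    (e : OrthonormalBasis (Fin 4) ℝ V) :
    ∀ X Y : V, ∑ i, R (e i) X Y (e i)
      = ((3/2) * a + b / 4) * m X Y + ((3/2) * a + (5/4) * b + c) * h X Y :=
  stmt13_general J hJ2 hJskew D hDdim hDJ h hh m hm Pp hPp Ph hPh Ps hPs a b c R hR e
end
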